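/- With the recursively constructed points a_{n₁,…,n_k}, gaps r_{n₁,…,n_k}, parameters α_k = 10^{−k}, and the set E as defined in the context, for every k ≥ 1 and all indices n₁,…,n_k ∈ ℕ⁺, taking x = a_{n₁,…,n_k} and r = (1/2)·r_{n₁,…,n_k}, one has max{ |(x−r, x) ∩ E|/r , |(x, x+r) ∩ E|/r } < 1 − 10^{−k}. -/
import Mathlib


open MeasureTheory Set Filter Topology

/-- `aSeq [n_k, n_{k-1}, …, n₁]` is the point `a_{n₁,…,n_k}` of the recursive construction
(the list stores the indices with the *last* index first):
`a_n = 2^{-n}` and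
`a_{n₁,…,n_k,n} = a_{n₁,…,n_{k-1},n_k+1} + 2^{-(n+3)} (a_{n₁,…,n_k} - a_{n₁,…,n_{k-1},n_k+1})`. -/
noncomputable def aSeq : List ℕ+ → ℝ
  | [] => 0
  | [n] => (2 : ℝ) ^ (-(n : ℤ))
  | n :: m :: L =>
      aSeq ((m + 1) :: L) + (2 : ℝ) ^ (-(n : ℤ) - 3) * (aSeq (m :: L) - aSeq ((m + 1) :: L))
  termination_by l => l.length

/-- `rSeq [n_k, …, n₁] = r_{n₁,…,n_k} = a_{n₁,…,n_k} - a_{n₁,…,n_{k-1},n_k+1}`. -/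
noncomputable def rSeq : List ℕ+ → ℝ
  | [] => 0
  | n :: L => aSeq (n :: L) - aSeq ((n + 1) :: L)

/-- `α_k = 10^{-k}`. -/
noncomputable def alphaSeq (k : ℕ) : ℝ := (10 : ℝ) ^ (-(k : ℤ))

/-- The left removed interval `I^L_{n₁,…,n_k}`. -/
noncomputable def ILSet (l : List ℕ+) : Set ℝ :=
  Set.Ioo (aSeq l - (1/2) * rSeq l) (aSeq l - (1/2 - alphaSeq l.length) * rSeq l)

/-- The right removed interval `I^R_{n₁,…,n_k}`. -/
noncomputable def IRSet (l : List ℕ+) : Set ℝ :=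
  Set.Ioo (aSeq l + (1/2 - alphaSeq l.length) * rSeq l) (aSeq l + (1/2) * rSeq l)

/-- The set `E = [-1,1] \ ⋃_{k ≥ 1, n₁,…,n_k} (I^L_{n₁,…,n_k} ∪ I^R_{n₁,…,n_k})`. -/
noncomputable def ESet : Set ℝ :=
  Set.Icc (-1 : ℝ) 1 \ ⋃ l ∈ {l : List ℕ+ | l ≠ []}, (ILSet l ∪ IRSet l)

lemma rSeq_pos : ∀ (L : List ℕ+) (n : ℕ+), 0 < rSeq (n :: L) := by
  intro L
  induction L with
  | nil =>
      intro n
      have : ((n + 1 : ℕ+) : ℤ) = (n : ℤ) + 1 := by push_cast; ring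
      simp only [rSeq, aSeq, this, sub_pos]
      apply zpow_lt_zpow_right₀ (by norm_num : (1:ℝ) < 2)
      omega
  | cons m L' ih =>
      intro n
      have h := ih m
      have e1 : rSeq (n :: m :: L') =
          ((2 : ℝ) ^ (-(n : ℤ) - 3) - (2 : ℝ) ^ (-((n+1 : ℕ+) : ℤ) - 3)) * rSeq (m :: L') := by
        simp only [rSeq, aSeq]; ring
      rw [e1]
      have : ((n + 1 : ℕ+) : ℤ) = (n : ℤ) + 1 := by push_cast; ring
      rw [this]
      have h3 : -((n:ℤ)+1) - 3 = -(n:ℤ) - 4 := by ring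
      rw [h3]
      have h2 : (2:ℝ) ^ (-(n : ℤ) - 4) < (2:ℝ) ^ (-(n : ℤ) - 3) := by
        apply zpow_lt_zpow_right₀ (by norm_num : (1:ℝ) < 2); omega
      nlinarith [h2, h]

/-- For `x = a_{n₁,…,n_k}` and `r = (1/2) r_{n₁,…,n_k}`, one has
`max{|(x-r,x) ∩ E| / r, |(x,x+r) ∩ E| / r} < 1 - 10^{-k}`. Here the sequence
`(n₁,…,n_k)` is encoded as the list `n :: L` with `n = n_k` and `k = L.length + 1`. -/
theorem density_lt_at_aSeq (n : ℕ+) (L : List ℕ+) :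
    max ((volume (Set.Ioo (aSeq (n :: L) - (1/2) * rSeq (n :: L)) (aSeq (n :: L)) ∩
            ESet)).toReal / ((1/2) * rSeq (n :: L)))
        ((volume (Set.Ioo (aSeq (n :: L)) (aSeq (n :: L) + (1/2) * rSeq (n :: L)) ∩
            ESet)).toReal / ((1/2) * rSeq (n :: L)))
      < 1 - (10 : ℝ) ^ (-(L.length + 1 : ℤ)) := by
  set x := aSeq (n :: L) with hx
  set R := rSeq (n :: L) with hRdef
  have hRpos : 0 < R := rSeq_pos L n
  set α : ℝ := alphaSeq (n :: L).length with hαdef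
  have hαval : α = (10:ℝ) ^ (-(L.length + 1 : ℤ)) := by
    rw [hαdef, alphaSeq]
    norm_num
  have hαpos : 0 < α := by rw [hαval]; positivity
  have hαle : α ≤ 1/10 := by
    rw [hαval]
    have : (10:ℝ) ^ (-(L.length + 1 : ℤ)) ≤ (10:ℝ) ^ (-1 : ℤ) := by
      apply zpow_le_zpow_right₀ (by norm_num : (1:ℝ) ≤ 10); omega
    simpa using this
  have hmem : (n :: L) ∈ {l : List ℕ+ | l ≠ []} := by simp
  -- left inclusion
  have hL : Set.Ioo (x - (1/2) * R) x ∩ ESet ⊆ Set.Ico (x - (1/2 - α) * R) x := by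
    rintro y ⟨hy1, hy2⟩
    have hnot : y ∉ ILSet (n :: L) := fun hm =>
      hy2.2 (Set.mem_biUnion hmem (Or.inl hm))
    refine ⟨?_, hy1.2⟩
    by_contra hlt
    push_neg at hlt
    exact hnot ⟨hy1.1, hlt⟩
  -- right inclusion
  have hR : Set.Ioo x (x + (1/2) * R) ∩ ESet ⊆ Set.Ioc x (x + (1/2 - α) * R) := by
    rintro y ⟨hy1, hy2⟩
    have hnot : y ∉ IRSet (n :: L) := fun hm =>
      hy2.2 (Set.mem_biUnion hmem (Or.inr hm))
    refine ⟨hy1.1, ?_⟩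
    by_contra hlt
    push_neg at hlt
    exact hnot ⟨hlt, hy1.2⟩
  have hbnd : (0:ℝ) ≤ (1/2 - α) * R := by nlinarith
  have hvL : (volume (Set.Ioo (x - (1/2) * R) x ∩ ESet)).toReal ≤ (1/2 - α) * R := by
    have h1 : volume (Set.Ioo (x - (1/2) * R) x ∩ ESet) ≤ volume (Set.Ico (x - (1/2 - α) * R) x) := measure_mono hL
    rw [Real.volume_Ico] at h1
    have h2 : x - (x - (1/2 - α) * R) = (1/2 - α) * R := by ring
    rw [h2] at h1
    exact ENNReal.toReal_le_of_le_ofReal hbnd h1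
  have hvR : (volume (Set.Ioo x (x + (1/2) * R) ∩ ESet)).toReal ≤ (1/2 - α) * R := by
    have h1 : volume (Set.Ioo x (x + (1/2) * R) ∩ ESet) ≤ volume (Set.Ioc x (x + (1/2 - α) * R)) := measure_mono hR
    rw [Real.volume_Ioc] at h1
    have h2 : x + (1/2 - α) * R - x = (1/2 - α) * R := by ring
    rw [h2] at h1
    exact ENNReal.toReal_le_of_le_ofReal hbnd h1
  rw [← hαval]
  have hhalf : 0 < (1/2 : ℝ) * R := by linarith
  apply max_lt
  · rw [div_lt_iff₀ hhalf]
    nlinarith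
  · rw [div_lt_iff₀ hhalf]
    nlinarith
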